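/- Let f ∈ ℂ[[x₁,…,x_n]] have order k (i.e., f ∈ m^k \ m^(k+1), m the maximal ideal). Assign weights wt(xᵢ) ∈ V to the variables (V a vector space over ℚ), and suppose f is homogeneous of weight 0. Let W = {wt(x₁),…,wt(x_n)} (with multiplicity recorded by d(α) = #{i : wt(xᵢ) = α}), and let C ⊆ W be a subset such that for all l ≥ k−1 the l-fold sumset of C is disjoint from −W. Then for every i, the partial derivative ∂f/∂xᵢ contains no monomial that is a product only of variables x_j with wt(x_j) ∈ C; consequently every ∂f/∂xᵢ vanishes identically on the linear subspace {x_j = 0 : wt(x_j) ∉ C}. -/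

import Mathlib

/-!
A monomial `x^a` of `∂f/∂xᵢ` comes from the monomial `x^a xᵢ` of `f`, which has degree `≥ k`
and weight `0`. Hence `x^a` has degree `≥ k - 1` and weight `-wt(xᵢ)`; if only variables with
weights in `C` occur in it, that weight is a `(deg a)`-fold sum of elements of `C`.
-/

/-- The formal partial derivative `∂/∂xᵢ` of a multivariate formal power series. -/
noncomputable def psDeriv {n : ℕ} {K : Type*} [CommRing K] (i : Fin n)
    (f : MvPowerSeries (Fin n) K) : MvPowerSeries (Fin n) K :=
  fun a => ((a i : K) + 1) * MvPowerSeries.coeff (a + Finsupp.single i 1) f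

/-- The weight of a monomial `x^a` with respect to weights `wt` of the variables. -/
def monWeight {n : ℕ} {Q : Type*} [AddCommGroup Q] (wt : Fin n → Q)
    (a : Fin n →₀ ℕ) : Q :=
  a.sum fun i m => m • wt i

/-- A power series is homogeneous of weight `χ` if every monomial appearing with nonzero
coefficient has weight `χ`. -/
def IsWtHomog {n : ℕ} {K Q : Type*} [CommRing K] [AddCommGroup Q] (wt : Fin n → Q)
    (χ : Q) (f : MvPowerSeries (Fin n) K) : Prop :=
  ∀ a : Fin n →₀ ℕ, MvPowerSeries.coeff a f ≠ 0 → monWeight wt a = χ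

theorem Multiset.exists_fin_sum_eq {M : Type*} [AddCommMonoid M] (s : Multiset M) :
    ∃ c : Fin (Multiset.card s) → M, (∀ j, c j ∈ s) ∧ ∑ j, c j = s.sum := by
  refine ⟨fun j => s.toList[(j : ℕ)]'(by simp), fun j => ?_, ?_⟩
  · exact Multiset.mem_toList.mp (List.getElem_mem _)
  · rw [← Multiset.sum_toList, ← Fin.sum_univ_getElem,
      ← Fin.sum_congr' (fun j : Fin s.toList.length => s.toList[(j : ℕ)])
        (Multiset.length_toList s).symm]
    rfl

section monWeight

variable {n : ℕ} {Q : Type*} [AddCommGroup Q] (wt : Fin n → Q)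

theorem monWeight_add (a b : Fin n →₀ ℕ) :
    monWeight wt (a + b) = monWeight wt a + monWeight wt b :=
  Finsupp.sum_add_index' (by simp) fun _ _ _ => add_smul _ _ _

theorem monWeight_single (i : Fin n) (m : ℕ) : monWeight wt (Finsupp.single i m) = m • wt i :=
  Finsupp.sum_single_index (zero_smul _ _)

theorem sum_map_toMultiset_eq_monWeight (a : Fin n →₀ ℕ) :
    (a.toMultiset.map wt).sum = monWeight wt a := by
  rw [Finsupp.toMultiset_map, Finsupp.sum_toMultiset, monWeight,
    Finsupp.sum_mapDomain_index (h := fun q m => m • q) (fun _ => zero_smul _ _)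
      fun _ _ _ => add_smul _ _ _]

theorem exists_fin_sum_eq_monWeight (a : Fin n →₀ ℕ) :
    ∃ c : Fin a.degree → Q, (∀ j, c j ∈ wt '' a.support) ∧ ∑ j, c j = monWeight wt a := by
  obtain ⟨c, hc_mem, hc_sum⟩ := (a.toMultiset.map wt).exists_fin_sum_eq
  have hcard : Multiset.card (a.toMultiset.map wt) = a.degree := by
    rw [Multiset.card_map, Finsupp.card_toMultiset]; rfl
  refine ⟨fun j => c (Fin.cast hcard.symm j), fun j => ?_, ?_⟩
  · obtain ⟨i, hi, hci⟩ := Multiset.mem_map.mp (hc_mem _)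
    exact ⟨i, (Finsupp.mem_toMultiset a i).mp hi, hci⟩
  · rw [Fin.sum_congr' c hcard.symm, hc_sum, sum_map_toMultiset_eq_monWeight]

end monWeight

theorem coeff_psDeriv {n : ℕ} {K : Type*} [CommRing K] (i : Fin n) (f : MvPowerSeries (Fin n) K)
    (a : Fin n →₀ ℕ) :
    MvPowerSeries.coeff a (psDeriv i f) =
      ((a i : K) + 1) * MvPowerSeries.coeff (a + Finsupp.single i 1) f :=
  rfl

theorem no_monomial_in_C_variables_general (n : ℕ) (V : Type*) [AddCommGroup V]
    (wt : Fin n → V) (f : MvPowerSeries (Fin n) ℂ) (k : ℕ)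
    (hord : ∀ a : Fin n →₀ ℕ, MvPowerSeries.coeff a f ≠ 0 → k ≤ a.sum fun _ m => m)
    (hhom : IsWtHomog wt 0 f)
    (C : Set V)
    (hsum : ∀ l : ℕ, k - 1 ≤ l → ∀ c : Fin l → V, (∀ i, c i ∈ C) →
      ∀ j : Fin n, (∑ i, c i) ≠ -(wt j)) :
    ∀ (i : Fin n) (a : Fin n →₀ ℕ), (∀ j ∈ a.support, wt j ∈ C) →
      MvPowerSeries.coeff a (psDeriv i f) = 0 := by
  intro i a ha
  by_contra h
  have hf : MvPowerSeries.coeff (a + Finsupp.single i 1) f ≠ 0 :=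
    right_ne_zero_of_mul (coeff_psDeriv i f a ▸ h)
  have hdeg : k - 1 ≤ a.degree := by
    have := hord _ hf
    change k ≤ (a + Finsupp.single i 1).degree at this
    rw [map_add, Finsupp.degree_single] at this
    omega
  have hwt : monWeight wt a = -wt i := by
    have := hhom _ hf
    rw [monWeight_add, monWeight_single, one_smul] at this
    exact eq_neg_of_add_eq_zero_left this
  obtain ⟨c, hcC, hc⟩ := exists_fin_sum_eq_monWeight wt a
  refine hsum _ hdeg c (fun j => ?_) i (hc.trans hwt)
  obtain ⟨x, hx, hxc⟩ := hcC j
  exact hxc ▸ ha x hx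

/-- Core combinatorial step: if `f ∈ ℂ[[x]]` has order `k`, is homogeneous of weight `0`,
and `C` is a set of weights whose `l`-fold sumsets (`l ≥ k-1`) avoid `-W`, then no partial
derivative of `f` contains a monomial built only from variables with weights in `C`. -/
theorem no_monomial_in_C_variables (n : ℕ) (V : Type*) [AddCommGroup V] [Module ℚ V]
    (wt : Fin n → V) (f : MvPowerSeries (Fin n) ℂ) (k : ℕ)
    (hord : ∀ a : Fin n →₀ ℕ, MvPowerSeries.coeff a f ≠ 0 → k ≤ a.sum fun _ m => m)
    (hordk : ∃ a : Fin n →₀ ℕ, MvPowerSeries.coeff a f ≠ 0 ∧ (a.sum fun _ m => m) = k)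
    (hhom : IsWtHomog wt 0 f)
    (C : Set V) (hC : C ⊆ Set.range wt)
    (hsum : ∀ l : ℕ, k - 1 ≤ l → ∀ c : Fin l → V, (∀ i, c i ∈ C) →
      ∀ j : Fin n, (∑ i, c i) ≠ -(wt j)) :
    ∀ (i : Fin n) (a : Fin n →₀ ℕ), (∀ j ∈ a.support, wt j ∈ C) →
      MvPowerSeries.coeff a (psDeriv i f) = 0 :=
  no_monomial_in_C_variables_general n V wt f k hord hhom C hsum
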